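/- arXiv:2511.22976 — 2 statements merged into one kernel-verified Lean document; each statement's English description precedes it below -/
import Mathlib

section
/- Let ρ and σ be faithful density matrices on ℂⁿ, and let u_1,…,u_n be a basis of ℂⁿ consisting of eigenvectors of ρ⁻¹σ such that ⟨u_i, ρ u_j⟩ = 0 whenever i ≠ j and u_i, u_j belong to the same eigenvalue of ρ⁻¹σ. Define the unit vectors ψ_i = ρ u_i / ‖ρ u_i‖. Then ρ = Σ_{i=1}^n ρ_i |ψ_i⟩⟨ψ_i| and σ = Σ_{i=1}^n σ_i |ψ_i⟩⟨ψ_i|, where ρ_i = ‖ρ u_i‖² / ⟨u_i, ρ u_i⟩ and σ_i = (‖ρ u_i‖² / ⟨u_i, ρ u_i⟩²) ⟨u_i, σ u_i⟩, and (ρ_i) and (σ_i) are probability vectors (nonnegative entries summing to 1). -/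
open MeasureTheory Matrix
open scoped ENNReal ComplexOrder Classical

noncomputable section

instance (n : ℕ) : MeasurableSpace (EuclideanSpace ℂ (Fin n)) := borel _
instance (n : ℕ) : BorelSpace (EuclideanSpace ℂ (Fin n)) := ⟨rfl⟩

/-- `ℂⁿ` as a Euclidean (Hilbert) space. -/
abbrev Hn (n : ℕ) := EuclideanSpace ℂ (Fin n)

/-- The unit sphere of `ℂⁿ`, identified with the set of pure states. -/
abbrev Sph (n : ℕ) := Metric.sphere (0 : Hn n) 1

/-- The rank-one matrix `|ψ⟩⟨ψ| = ψ ψ†`. -/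
def outer {n : ℕ} (ψ : Fin n → ℂ) : Matrix (Fin n) (Fin n) ℂ :=
  Matrix.of fun i j => ψ i * (starRingEnd ℂ) (ψ j)

/-- The rank-one matrix `|x⟩⟨y| = x y†`. -/
def outer2 {n : ℕ} (x y : Fin n → ℂ) : Matrix (Fin n) (Fin n) ℂ :=
  Matrix.of fun i j => x i * (starRingEnd ℂ) (y j)

/-- The standard inner product on `ℂⁿ`, antilinear in the first argument. -/
def ip {n : ℕ} (x y : Fin n → ℂ) : ℂ := ∑ i, (starRingEnd ℂ) (x i) * y i

/-- The norm on `ℂⁿ` induced by `ip`. -/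
def nrm {n : ℕ} (x : Fin n → ℂ) : ℝ := Real.sqrt (ip x x).re

/-- `Λ(μ) = ∫ |ψ⟩⟨ψ| dμ(ψ)`, defined entrywise. -/
def Lambda {n : ℕ} (μ : Measure (Sph n)) : Matrix (Fin n) (Fin n) ℂ :=
  Matrix.of fun i j => ∫ ψ, ((ψ : Hn n) i * (starRingEnd ℂ) ((ψ : Hn n) j)) ∂μ

/-- Kullback–Leibler divergence `∫ log(dμ/dν) dμ` if `μ ≪ ν` (with value `⊤` if the
integral does not exist), and `⊤` otherwise. -/
def KLdiv {X : Type*} [MeasurableSpace X] (μ ν : Measure X) : EReal :=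
  if μ ≪ ν ∧ Integrable (llr μ ν) μ then ((∫ x, llr μ ν x ∂μ : ℝ) : EReal) else ⊤

/-- The positive square root of a positive semidefinite matrix (junk value `0` otherwise). -/
def msqrt {n : ℕ} (A : Matrix (Fin n) (Fin n) ℂ) : Matrix (Fin n) (Fin n) ℂ :=
  if h : A.PosSemidef then (h.1.eigenvectorUnitary : Matrix (Fin n) (Fin n) ℂ) *
    diagonal ((↑) ∘ (√·) ∘ h.1.eigenvalues) * (star h.1.eigenvectorUnitary : Matrix (Fin n) (Fin n) ℂ) else 0

/-- `f` applied to a Hermitian matrix via the continuous functional calculus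
(junk value `0` on non-Hermitian matrices). -/
def mcfc {n : ℕ} (f : ℝ → ℝ) (A : Matrix (Fin n) (Fin n) ℂ) : Matrix (Fin n) (Fin n) ℂ :=
  if h : A.IsHermitian then h.cfc f else 0

/-- The matrix logarithm, via the continuous functional calculus. -/
def mlog {n : ℕ} (A : Matrix (Fin n) (Fin n) ℂ) : Matrix (Fin n) (Fin n) ℂ :=
  mcfc Real.log A

/-- The Belavkin–Staszewski relative entropy `Tr[ρ log(√ρ σ⁻¹ √ρ)]`. -/
def DBS {n : ℕ} (ρ σ : Matrix (Fin n) (Fin n) ℂ) : ℝ :=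
  ((ρ * mlog (msqrt ρ * σ⁻¹ * msqrt ρ)).trace).re

/-- The trace distance `½ Tr[√((A−B)†(A−B))]`. -/
def traceDist {n : ℕ} (A B : Matrix (Fin n) (Fin n) ℂ) : ℝ :=
  (1 / 2) * ((msqrt ((A - B)ᴴ * (A - B))).trace).re

/-- The Fubini–Study distance `arccos |⟨ψ, φ⟩|` between unit vectors. -/
def dFS {n : ℕ} (ψ φ : Hn n) : ℝ := Real.arccos ‖(inner ℂ ψ φ : ℂ)‖

/-- The (closed) support of a measure. -/
def msupport {X : Type*} [TopologicalSpace X] [MeasurableSpace X] (μ : Measure X) : Set X :=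
  {x | ∀ U : Set X, IsOpen U → x ∈ U → μ U ≠ 0}

-- ===== auxiliary lemmas =====

lemma ip_eq_dot {n : ℕ} (x y : Fin n → ℂ) : ip x y = star x ⬝ᵥ y := rfl

lemma ip_smul_right {n : ℕ} (a : ℂ) (x y : Fin n → ℂ) : ip x (a • y) = a * ip x y := by
  simp only [ip, Pi.smul_apply, smul_eq_mul, Finset.mul_sum]
  exact Finset.sum_congr rfl fun i _ => by ring

lemma ip_smul_left {n : ℕ} (a : ℂ) (x y : Fin n → ℂ) :
    ip (a • x) y = (starRingEnd ℂ) a * ip x y := by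
  simp only [ip, Pi.smul_apply, smul_eq_mul, _root_.map_mul, Finset.mul_sum]
  exact Finset.sum_congr rfl fun i _ => by ring

lemma ip_conj {n : ℕ} (x y : Fin n → ℂ) : (starRingEnd ℂ) (ip x y) = ip y x := by
  simp only [ip, map_sum, _root_.map_mul, Complex.conj_conj]
  exact Finset.sum_congr rfl fun i _ => by ring

lemma ip_herm {n : ℕ} {A : Matrix (Fin n) (Fin n) ℂ} (hA : A.IsHermitian)
    (x y : Fin n → ℂ) : ip x (A *ᵥ y) = ip (A *ᵥ x) y := by
  rw [ip_eq_dot, ip_eq_dot, Matrix.star_mulVec, Matrix.dotProduct_mulVec, hA]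

lemma ip_zero_right {n : ℕ} (x : Fin n → ℂ) : ip x 0 = 0 := by simp [ip]

lemma outer2_mulVec {n : ℕ} (x y z : Fin n → ℂ) : outer2 x y *ᵥ z = ip y z • x := by
  funext k
  simp only [Matrix.mulVec, dotProduct, outer2, Matrix.of_apply, Pi.smul_apply, ip,
    smul_eq_mul, Finset.sum_mul]
  exact Finset.sum_congr rfl fun i _ => by ring

lemma trace_outer2 {n : ℕ} (x y : Fin n → ℂ) : (outer2 x y).trace = ip y x := by
  simp only [Matrix.trace, Matrix.diag, outer2, Matrix.of_apply, ip]
  exact Finset.sum_congr rfl fun i _ => by ring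

lemma outer_eq_outer2 {n : ℕ} (x : Fin n → ℂ) : outer x = outer2 x x := rfl

lemma outer2_smul_smul {n : ℕ} (a : ℂ) (x : Fin n → ℂ) :
    outer2 (a • x) (a • x) = (a * (starRingEnd ℂ) a) • outer2 x x := by
  ext i j
  simp only [outer2, Matrix.of_apply, Pi.smul_apply, smul_eq_mul, Matrix.smul_apply,
    _root_.map_mul]
  ring

lemma ip_self_eq {n : ℕ} (x : Fin n → ℂ) :
    ip x x = ((∑ k, Complex.normSq (x k) : ℝ) : ℂ) := by
  simp only [ip, Complex.ofReal_sum]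
  exact Finset.sum_congr rfl fun i _ => Complex.normSq_eq_conj_mul_self.symm

lemma sq_nrm {n : ℕ} (x : Fin n → ℂ) : (nrm x : ℝ) ^ 2 = (ip x x).re := by
  rw [nrm, Real.sq_sqrt]
  rw [ip_self_eq]
  simp only [Complex.ofReal_re]
  exact Finset.sum_nonneg fun i _ => Complex.normSq_nonneg _

lemma ip_self_ofReal {n : ℕ} (x : Fin n → ℂ) :
    ip x x = ((nrm x ^ 2 : ℝ) : ℂ) := by
  rw [sq_nrm, ip_self_eq]
  simp

lemma nrm_pos {n : ℕ} {x : Fin n → ℂ} (hx : x ≠ 0) : 0 < nrm x := by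
  rw [nrm]
  apply Real.sqrt_pos.2
  rw [ip_self_eq]
  simp only [Complex.ofReal_re]
  apply Finset.sum_pos'
  · exact fun i _ => Complex.normSq_nonneg _
  · obtain ⟨k, hk⟩ := Function.ne_iff.1 hx
    exact ⟨k, Finset.mem_univ k, by simpa [Complex.normSq_pos] using hk⟩

lemma ext_of_li {n : ℕ} (A B : Matrix (Fin n) (Fin n) ℂ) (u : Fin n → Fin n → ℂ)
    (hu : LinearIndependent ℂ u) (h : ∀ j, A *ᵥ u j = B *ᵥ u j) : A = B := by
  rcases Nat.eq_zero_or_pos n with h0 | h0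
  · ext i j; exact absurd i.2 (by omega)
  · have : Nonempty (Fin n) := ⟨⟨0, h0⟩⟩
    have hcard : Fintype.card (Fin n) = Module.finrank ℂ (Fin n → ℂ) := by simp
    let b := basisOfLinearIndependentOfCardEqFinrank hu hcard
    have hb : ∀ i, b i = u i := fun i => by
      simp [b, coe_basisOfLinearIndependentOfCardEqFinrank]
    have : Matrix.toLin' A = Matrix.toLin' B := by
      apply b.ext
      intro i
      simp [Matrix.toLin'_apply, hb, h i]
    exact Matrix.toLin'.injective this

lemma sum_mulVec' {n : ℕ} (M : Fin n → Matrix (Fin n) (Fin n) ℂ) (v : Fin n → ℂ) :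
    (∑ i, M i) *ᵥ v = ∑ i, (M i *ᵥ v) := by
  funext k
  simp [Matrix.mulVec, dotProduct, Matrix.sum_apply, Finset.sum_mul]
  exact Finset.sum_comm


/-- Given a basis `u_i` of eigenvectors of `ρ⁻¹σ` which is `ρ`-orthogonal within each
eigenspace, the unit vectors `ψ_i = ρ u_i / ‖ρ u_i‖` form a common basis for `(ρ, σ)` with
the explicit weights `ρ_i = ‖ρ u_i‖² / ⟨u_i, ρ u_i⟩` and
`σ_i = (‖ρ u_i‖² / ⟨u_i, ρ u_i⟩²) ⟨u_i, σ u_i⟩`, which are probability vectors. -/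
theorem stmt4 {n : ℕ} (ρ σ : Matrix (Fin n) (Fin n) ℂ)
    (hρ : ρ.PosDef) (hσ : σ.PosDef) (hρ1 : ρ.trace = 1) (hσ1 : σ.trace = 1)
    (u : Fin n → (Fin n → ℂ)) (hu : LinearIndependent ℂ u)
    (ev : Fin n → ℂ) (hev : ∀ i, (ρ⁻¹ * σ) *ᵥ u i = ev i • u i)
    (horth : ∀ i j, i ≠ j → ev i = ev j → ip (u i) (ρ *ᵥ u j) = 0)
    (ψ : Fin n → (Fin n → ℂ))
    (hψ : ∀ i, ψ i = ((nrm (ρ *ᵥ u i) : ℝ) : ℂ)⁻¹ • (ρ *ᵥ u i))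
    (p q : Fin n → ℝ)
    (hp : ∀ i, p i = nrm (ρ *ᵥ u i) ^ 2 / (ip (u i) (ρ *ᵥ u i)).re)
    (hq : ∀ i, q i = nrm (ρ *ᵥ u i) ^ 2 / (ip (u i) (ρ *ᵥ u i)).re ^ 2
      * (ip (u i) (σ *ᵥ u i)).re) :
    ρ = ∑ i, (p i : ℂ) • outer (ψ i) ∧
    σ = ∑ i, (q i : ℂ) • outer (ψ i) ∧
    (∀ i, 0 ≤ p i) ∧ ∑ i, p i = 1 ∧
    (∀ i, 0 ≤ q i) ∧ ∑ i, q i = 1 := by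
  classical
  -- basic positivity facts
  have hρdet : IsUnit ρ.det := hρ.det_pos.ne'.isUnit
  have hune : ∀ i, u i ≠ 0 := fun i => hu.ne_zero i
  have hcpos : ∀ i, 0 < ip (u i) (ρ *ᵥ u i) := fun i => by
    rw [ip_eq_dot]; exact hρ.dotProduct_mulVec_pos (hune i)
  have hspos : ∀ i, 0 < ip (u i) (σ *ᵥ u i) := fun i => by
    rw [ip_eq_dot]; exact hσ.dotProduct_mulVec_pos (hune i)
  have hcre : ∀ i, 0 < (ip (u i) (ρ *ᵥ u i)).re := fun i => by
    simpa using (Complex.lt_def.1 (hcpos i)).1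
  have hcim : ∀ i, (ip (u i) (ρ *ᵥ u i)).im = 0 := fun i => by
    simpa using (Complex.lt_def.1 (hcpos i)).2.symm
  have hsre : ∀ i, 0 < (ip (u i) (σ *ᵥ u i)).re := fun i => by
    simpa using (Complex.lt_def.1 (hspos i)).1
  have hsim : ∀ i, (ip (u i) (σ *ᵥ u i)).im = 0 := fun i => by
    simpa using (Complex.lt_def.1 (hspos i)).2.symm
  have hcne : ∀ i, ip (u i) (ρ *ᵥ u i) ≠ 0 := fun i => (hcpos i).ne'
  have hcreal : ∀ i, ip (u i) (ρ *ᵥ u i) = (((ip (u i) (ρ *ᵥ u i)).re : ℝ) : ℂ) :=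
    fun i => Complex.ext (by simp) (by simp [hcim i])
  -- σ u = ev • ρ u
  have hσu : ∀ i, σ *ᵥ u i = ev i • (ρ *ᵥ u i) := by
    intro i
    have h1 : ρ *ᵥ ((ρ⁻¹ * σ) *ᵥ u i) = ρ *ᵥ (ev i • u i) := congrArg _ (hev i)
    rwa [Matrix.mulVec_mulVec, ← mul_assoc, Matrix.mul_nonsing_inv _ hρdet, one_mul,
      Matrix.mulVec_smul] at h1
  have hs_ev : ∀ i, ip (u i) (σ *ᵥ u i) = ev i * ip (u i) (ρ *ᵥ u i) := fun i => by
    rw [hσu i, ip_smul_right]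
  -- eigenvalues are real
  have hevconj : ∀ i, (starRingEnd ℂ) (ev i) = ev i := by
    intro i
    have h1 : (starRingEnd ℂ) (ev i) * ip (u i) (ρ *ᵥ u i) = ev i * ip (u i) (ρ *ᵥ u i) := by
      have h2 := congrArg (starRingEnd ℂ) (hs_ev i)
      rw [_root_.map_mul, Complex.conj_eq_iff_im.2 (hsim i),
        Complex.conj_eq_iff_im.2 (hcim i)] at h2
      rw [← h2, hs_ev i]
    exact mul_right_cancel₀ (hcne i) h1
  have hevim : ∀ i, (ev i).im = 0 := fun i => Complex.conj_eq_iff_im.1 (hevconj i)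
  have hevreal : ∀ i, ev i = (((ev i).re : ℝ) : ℂ) :=
    fun i => Complex.ext (by simp) (by simp [hevim i])
  -- full ρ-orthogonality
  have hKey : ∀ i j, ip (u i) (ρ *ᵥ u j) = if i = j then ip (u j) (ρ *ᵥ u j) else 0 := by
    intro i j
    rcases eq_or_ne i j with hij | hij
    · subst hij; rw [if_pos rfl]
    · rw [if_neg hij]
      by_cases hevij : ev i = ev j
      · exact horth i j hij hevij
      · have h1 : ip (u i) (σ *ᵥ u j) = ev j * ip (u i) (ρ *ᵥ u j) := by
          rw [hσu j, ip_smul_right]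
        have h2 : ip (u i) (σ *ᵥ u j) = ev i * ip (u i) (ρ *ᵥ u j) := by
          rw [ip_herm hσ.1, ← ip_conj, hσu i, ip_smul_right, _root_.map_mul, hevconj i,
            ip_conj, ← ip_herm hρ.1]
        have h3 : (ev j - ev i) * ip (u i) (ρ *ᵥ u j) = 0 := by
          rw [sub_mul, ← h1, ← h2, sub_self]
        exact (mul_eq_zero.1 h3).resolve_left (sub_ne_zero.2 fun h => hevij h.symm)
  -- nonvanishing of ρ u
  have hvne : ∀ i, ρ *ᵥ u i ≠ 0 := by
    intro i h
    exact hcne i (by rw [h, ip_zero_right])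
  have hrpos : ∀ i, 0 < nrm (ρ *ᵥ u i) := fun i => nrm_pos (hvne i)
  have hrne : ∀ i, ((nrm (ρ *ᵥ u i) : ℝ) : ℂ) ≠ 0 :=
    fun i => Complex.ofReal_ne_zero.2 (hrpos i).ne'
  -- per-term identities
  have hterm1 : ∀ i, (p i : ℂ) • outer (ψ i)
      = (ip (u i) (ρ *ᵥ u i))⁻¹ • outer2 (ρ *ᵥ u i) (ρ *ᵥ u i) := by
    intro i
    rw [hψ i, outer_eq_outer2, outer2_smul_smul, smul_smul]
    congr 1
    rw [map_inv₀, Complex.conj_ofReal, hp i]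
    rw [hcreal i]
    push_cast
    have h1 := hrne i
    have h2 : ((((ip (u i) (ρ *ᵥ u i)).re) : ℝ) : ℂ) ≠ 0 :=
      Complex.ofReal_ne_zero.2 (hcre i).ne'
    field_simp
    simp [h2]
  have hterm2 : ∀ i, (q i : ℂ) • outer (ψ i)
      = (ev i * (ip (u i) (ρ *ᵥ u i))⁻¹) • outer2 (ρ *ᵥ u i) (ρ *ᵥ u i) := by
    intro i
    rw [hψ i, outer_eq_outer2, outer2_smul_smul, smul_smul]
    congr 1
    rw [map_inv₀, Complex.conj_ofReal, hq i]
    have hsre_eq : (ip (u i) (σ *ᵥ u i)).re = (ev i).re * (ip (u i) (ρ *ᵥ u i)).re := by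
      rw [hs_ev i, Complex.mul_re, hevim i]
      ring
    rw [hsre_eq]
    conv_rhs => rw [hevreal i, hcreal i]
    push_cast
    have h1 := hrne i
    have h2 : ((((ip (u i) (ρ *ᵥ u i)).re) : ℝ) : ℂ) ≠ 0 :=
      Complex.ofReal_ne_zero.2 (hcre i).ne'
    field_simp
  -- reconstruction of ρ
  have hip_vu : ∀ i j, ip (ρ *ᵥ u i) (u j)
      = if i = j then ip (u i) (ρ *ᵥ u i) else 0 := by
    intro i j
    rw [← ip_conj, hKey j i]
    rcases eq_or_ne i j with h | h
    · subst h
      simp [Complex.conj_eq_iff_im.2 (hcim i)]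
    · rw [if_neg (Ne.symm h), if_neg h, map_zero]
  have hsummand1 : ∀ j i, ((ip (u i) (ρ *ᵥ u i))⁻¹ • outer2 (ρ *ᵥ u i) (ρ *ᵥ u i)) *ᵥ u j
      = if i = j then ρ *ᵥ u j else 0 := by
    intro j i
    rw [Matrix.smul_mulVec, outer2_mulVec, hip_vu i j, smul_smul]
    rcases eq_or_ne i j with h | h
    · subst h
      rw [if_pos rfl, if_pos rfl, inv_mul_cancel₀ (hcne i), one_smul]
    · rw [if_neg h, if_neg h, mul_zero, zero_smul]
  have hρ_eq : ρ = ∑ i, (p i : ℂ) • outer (ψ i) := by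
    rw [Finset.sum_congr rfl fun i _ => hterm1 i]
    refine (ext_of_li _ ρ u hu fun j => ?_).symm
    rw [sum_mulVec', Finset.sum_congr rfl fun i _ => hsummand1 j i,
      Finset.sum_ite_eq' Finset.univ j, if_pos (Finset.mem_univ j)]
  have hsummand2 : ∀ j i,
      ((ev i * (ip (u i) (ρ *ᵥ u i))⁻¹) • outer2 (ρ *ᵥ u i) (ρ *ᵥ u i)) *ᵥ u j
      = if i = j then ev j • (ρ *ᵥ u j) else 0 := by
    intro j i
    rw [Matrix.smul_mulVec, outer2_mulVec, hip_vu i j, smul_smul]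
    rcases eq_or_ne i j with h | h
    · subst h
      rw [if_pos rfl, if_pos rfl, mul_assoc, inv_mul_cancel₀ (hcne i), mul_one]
    · rw [if_neg h, if_neg h, mul_zero, zero_smul]
  have hσ_eq : σ = ∑ i, (q i : ℂ) • outer (ψ i) := by
    rw [Finset.sum_congr rfl fun i _ => hterm2 i]
    refine (ext_of_li _ σ u hu fun j => ?_).symm
    rw [sum_mulVec', Finset.sum_congr rfl fun i _ => hsummand2 j i,
      Finset.sum_ite_eq' Finset.univ j, if_pos (Finset.mem_univ j), ← hσu j]
  -- traces
  have htr1 : ∀ i, (outer (ψ i)).trace = 1 := by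
    intro i
    rw [outer_eq_outer2, trace_outer2, hψ i, ip_smul_left, ip_smul_right, map_inv₀,
      Complex.conj_ofReal, ip_self_ofReal]
    push_cast
    field_simp
    rw [div_self (hrne i)]
  have hsum_p : ∑ i, p i = 1 := by
    have h := congrArg Matrix.trace hρ_eq
    rw [hρ1, Matrix.trace_sum] at h
    simp only [Matrix.trace_smul, htr1, smul_eq_mul, mul_one] at h
    exact_mod_cast h.symm
  have hsum_q : ∑ i, q i = 1 := by
    have h := congrArg Matrix.trace hσ_eq
    rw [hσ1, Matrix.trace_sum] at h
    simp only [Matrix.trace_smul, htr1, smul_eq_mul, mul_one] at h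
    exact_mod_cast h.symm
  refine ⟨hρ_eq, hσ_eq, fun i => ?_, hsum_p, fun i => ?_, hsum_q⟩
  · rw [hp i]
    exact div_nonneg (sq_nonneg _) (hcre i).le
  · rw [hq i]
    exact mul_nonneg (div_nonneg (sq_nonneg _) (sq_nonneg _)) (hsre i).le

end
end

section
/- Let ρ and σ be faithful density matrices on ℂⁿ such that ρ⁻¹σ has n distinct eigenvalues. Suppose {ψ_1,…,ψ_n} and {φ_1,…,φ_n} are two common bases for the pair (ρ, σ), i.e., two bases of unit vectors of ℂⁿ in which both ρ and σ are convex combinations of the corresponding rank-one projections. Then there exist a permutation π of {1,…,n} and complex scalars c_i with |c_i| = 1 such that ψ_i = c_i φ_{π(i)} for every i; that is, the common basis is unique up to permutation and phases. -/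
open MeasureTheory Matrix
open scoped ENNReal ComplexOrder Classical

noncomputable section

lemma aux_sum_outer {n : ℕ} (v : Fin n → Fin n → ℂ) (c : Fin n → ℂ) :
    ∑ i, c i • outer (v i) = (Matrix.of v)ᵀ * Matrix.diagonal c * ((Matrix.of v)ᵀ)ᴴ := by
  ext a b
  rw [Matrix.mul_apply]
  simp only [Matrix.sum_apply, Matrix.smul_apply, outer, Matrix.of_apply, smul_eq_mul,
    Matrix.mul_diagonal, Matrix.conjTranspose_apply, Matrix.transpose_apply,
    Complex.star_def]
  exact Finset.sum_congr rfl fun j _ => by ring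

lemma aux_diag_inv {n : ℕ} (c : Fin n → ℂ) (hc : ∀ i, c i ≠ 0) :
    (Matrix.diagonal c)⁻¹ = Matrix.diagonal (fun i => (c i)⁻¹) := by
  apply Matrix.inv_eq_right_inv
  rw [Matrix.diagonal_mul_diagonal]
  have : (fun i => c i * (c i)⁻¹) = fun _ => (1:ℂ) := funext fun i => mul_inv_cancel₀ (hc i)
  rw [this, Matrix.diagonal_one]

lemma aux_inv {n : ℕ} (A : Matrix (Fin n) (Fin n) ℂ) (c : Fin n → ℂ) (hc : ∀ i, c i ≠ 0) :
    (A * Matrix.diagonal c * Aᴴ)⁻¹ = (Aᴴ)⁻¹ * Matrix.diagonal (fun i => (c i)⁻¹) * A⁻¹ := by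
  rw [Matrix.mul_inv_rev, Matrix.mul_inv_rev, aux_diag_inv c hc, Matrix.mul_assoc]

lemma nrm_smul {n : ℕ} (c : ℂ) (x : Fin n → ℂ) :
    nrm (c • x) = ‖c‖ * nrm x := by
  have h : ip (c • x) (c • x) = (Complex.normSq c : ℂ) * ip x x := by
    unfold ip
    rw [Finset.mul_sum]
    refine Finset.sum_congr rfl fun i _ => ?_
    simp only [Pi.smul_apply, smul_eq_mul, ← Complex.normSq_eq_conj_mul_self,
      Complex.normSq_mul, Complex.ofReal_mul]
  unfold nrm
  rw [h, Complex.re_ofReal_mul, Real.sqrt_mul (Complex.normSq_nonneg c), Complex.norm_def]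

/-- **Uniqueness of the common basis**: if `ρ⁻¹σ` has `n` distinct eigenvalues, then any two
common bases for `(ρ, σ)` agree up to a permutation and phases. -/
theorem stmt10 {n : ℕ} (ρ σ : Matrix (Fin n) (Fin n) ℂ)
    (hρ : ρ.PosDef) (hσ : σ.PosDef) (hρ1 : ρ.trace = 1) (hσ1 : σ.trace = 1)
    (hdist : (spectrum ℂ (ρ⁻¹ * σ)).ncard = n)
    (ψ φ : Fin n → (Fin n → ℂ))
    (hψn : ∀ i, nrm (ψ i) = 1) (hφn : ∀ i, nrm (φ i) = 1)
    (hψli : LinearIndependent ℂ ψ) (hφli : LinearIndependent ℂ φ)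
    (p q p' q' : Fin n → ℝ)
    (hp : ∀ i, 0 ≤ p i) (hps : ∑ i, p i = 1)
    (hq : ∀ i, 0 ≤ q i) (hqs : ∑ i, q i = 1)
    (hp' : ∀ i, 0 ≤ p' i) (hps' : ∑ i, p' i = 1)
    (hq' : ∀ i, 0 ≤ q' i) (hqs' : ∑ i, q' i = 1)
    (hρψ : ρ = ∑ i, (p i : ℂ) • outer (ψ i))
    (hσψ : σ = ∑ i, (q i : ℂ) • outer (ψ i))
    (hρφ : ρ = ∑ i, (p' i : ℂ) • outer (φ i))
    (hσφ : σ = ∑ i, (q' i : ℂ) • outer (φ i)) :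
    ∃ (e : Equiv.Perm (Fin n)) (c : Fin n → ℂ),
      (∀ i, ‖c i‖ = 1) ∧ ∀ i, ψ i = c i • φ (e i) := by
  classical
  set Ψm : Matrix (Fin n) (Fin n) ℂ := (Matrix.of ψ)ᵀ with hΨdef
  set Φm : Matrix (Fin n) (Fin n) ℂ := (Matrix.of φ)ᵀ with hΦdef
  have hΨu : IsUnit Ψm := (Matrix.isUnit_transpose _).mpr
    (Matrix.linearIndependent_rows_iff_isUnit.mp hψli)
  have hΦu : IsUnit Φm := (Matrix.isUnit_transpose _).mpr
    (Matrix.linearIndependent_rows_iff_isUnit.mp hφli)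
  have hΨd : IsUnit Ψm.det := (Matrix.isUnit_iff_isUnit_det _).mp hΨu
  have hΦd : IsUnit Φm.det := (Matrix.isUnit_iff_isUnit_det _).mp hΦu
  have hΨHd : IsUnit (Ψmᴴ).det := (Matrix.isUnit_iff_isUnit_det _).mp
    ((Matrix.isUnit_conjTranspose _).mpr hΨu)
  have hΦHd : IsUnit (Φmᴴ).det := (Matrix.isUnit_iff_isUnit_det _).mp
    ((Matrix.isUnit_conjTranspose _).mpr hΦu)
  have hρΨ : ρ = Ψm * Matrix.diagonal (fun i => (p i : ℂ)) * Ψmᴴ := by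
    rw [hρψ]; exact aux_sum_outer _ _
  have hσΨ : σ = Ψm * Matrix.diagonal (fun i => (q i : ℂ)) * Ψmᴴ := by
    rw [hσψ]; exact aux_sum_outer _ _
  have hρΦ : ρ = Φm * Matrix.diagonal (fun i => (p' i : ℂ)) * Φmᴴ := by
    rw [hρφ]; exact aux_sum_outer _ _
  have hσΦ : σ = Φm * Matrix.diagonal (fun i => (q' i : ℂ)) * Φmᴴ := by
    rw [hσφ]; exact aux_sum_outer _ _
  -- nonvanishing of p, p'
  have hpne : ∀ i, (p i : ℂ) ≠ 0 := by
    have hdet : ρ.det ≠ 0 :=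
      isUnit_iff_ne_zero.mp ((Matrix.isUnit_iff_isUnit_det ρ).mp hρ.isUnit)
    rw [hρΨ, Matrix.det_mul, Matrix.det_mul, Matrix.det_diagonal] at hdet
    have hprod : (∏ i, (p i : ℂ)) ≠ 0 := by
      intro h0; exact hdet (by rw [h0, mul_zero, zero_mul])
    exact fun i => Finset.prod_ne_zero_iff.mp hprod i (Finset.mem_univ i)
  have hp'ne : ∀ i, (p' i : ℂ) ≠ 0 := by
    have hdet : ρ.det ≠ 0 :=
      isUnit_iff_ne_zero.mp ((Matrix.isUnit_iff_isUnit_det ρ).mp hρ.isUnit)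
    rw [hρΦ, Matrix.det_mul, Matrix.det_mul, Matrix.det_diagonal] at hdet
    have hprod : (∏ i, (p' i : ℂ)) ≠ 0 := by
      intro h0; exact hdet (by rw [h0, mul_zero, zero_mul])
    exact fun i => Finset.prod_ne_zero_iff.mp hprod i (Finset.mem_univ i)
  set lam : Fin n → ℂ := fun i => (q i : ℂ) * (p i : ℂ)⁻¹ with hlamdef
  set mu : Fin n → ℂ := fun j => (q' j : ℂ) * (p' j : ℂ)⁻¹ with hmudef
  -- spectrum computations
  have hspecΨ : spectrum ℂ (ρ⁻¹ * σ) = Set.range lam := by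
    have h1 : ρ⁻¹ * σ = (Ψmᴴ)⁻¹ * Matrix.diagonal lam * Ψmᴴ := by
      rw [hρΨ, hσΨ, aux_inv _ _ hpne]
      simp only [Matrix.mul_assoc]
      rw [Matrix.nonsing_inv_mul_cancel_left _ _ hΨd,
        ← Matrix.mul_assoc (Matrix.diagonal _) (Matrix.diagonal _),
        Matrix.diagonal_mul_diagonal]
      congr 2
      exact congrArg Matrix.diagonal (funext fun i => mul_comm _ _)
    obtain ⟨u, hu'⟩ := (Matrix.isUnit_conjTranspose _).mpr hΨu
    rw [h1, ← hu', ← Matrix.coe_units_inv, spectrum.units_conjugate',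
      spectrum_diagonal]
  have hspecΦ : spectrum ℂ (ρ⁻¹ * σ) = Set.range mu := by
    have h1 : ρ⁻¹ * σ = (Φmᴴ)⁻¹ * Matrix.diagonal mu * Φmᴴ := by
      rw [hρΦ, hσΦ, aux_inv _ _ hp'ne]
      simp only [Matrix.mul_assoc]
      rw [Matrix.nonsing_inv_mul_cancel_left _ _ hΦd,
        ← Matrix.mul_assoc (Matrix.diagonal _) (Matrix.diagonal _),
        Matrix.diagonal_mul_diagonal]
      congr 2
      exact congrArg Matrix.diagonal (funext fun i => mul_comm _ _)
    obtain ⟨u, hu'⟩ := (Matrix.isUnit_conjTranspose _).mpr hΦu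
    rw [h1, ← hu', ← Matrix.coe_units_inv, spectrum.units_conjugate',
      spectrum_diagonal]
  -- injectivity of lam and mu
  have hlaminj : Function.Injective lam := by
    have h1 : (Finset.univ.image lam).card = n := by
      rw [← Set.ncard_coe_finset, Finset.coe_image, Finset.coe_univ, Set.image_univ, ← hspecΨ]
      exact hdist
    have h2 := Finset.injOn_of_card_image_eq
      (by rw [h1, Finset.card_univ, Fintype.card_fin] : (Finset.univ.image lam).card = Finset.univ.card)
    exact fun a b hab => h2 (Finset.mem_univ a) (Finset.mem_univ b) hab
  have hmuinj : Function.Injective mu := by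
    have h1 : (Finset.univ.image mu).card = n := by
      rw [← Set.ncard_coe_finset, Finset.coe_image, Finset.coe_univ, Set.image_univ, ← hspecΦ]
      exact hdist
    have h2 := Finset.injOn_of_card_image_eq
      (by rw [h1, Finset.card_univ, Fintype.card_fin] : (Finset.univ.image mu).card = Finset.univ.card)
    exact fun a b hab => h2 (Finset.mem_univ a) (Finset.mem_univ b) hab
  -- the intertwining relation
  set M : Matrix (Fin n) (Fin n) ℂ := Φm⁻¹ * Ψm with hMdef
  have e1 : σ * ρ⁻¹ = Ψm * Matrix.diagonal lam * Ψm⁻¹ := by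
    rw [hρΨ, hσΨ, aux_inv _ _ hpne]
    simp only [Matrix.mul_assoc]
    rw [Matrix.mul_nonsing_inv_cancel_left _ _ hΨHd,
      ← Matrix.mul_assoc (Matrix.diagonal _) (Matrix.diagonal _),
      Matrix.diagonal_mul_diagonal]
  have e2 : σ * ρ⁻¹ = Φm * Matrix.diagonal mu * Φm⁻¹ := by
    rw [hρΦ, hσΦ, aux_inv _ _ hp'ne]
    simp only [Matrix.mul_assoc]
    rw [Matrix.mul_nonsing_inv_cancel_left _ _ hΦHd,
      ← Matrix.mul_assoc (Matrix.diagonal _) (Matrix.diagonal _),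
      Matrix.diagonal_mul_diagonal]
  have hcommon : M * Matrix.diagonal lam = Matrix.diagonal mu * M := by
    have h := e1.symm.trans e2
    have c1 : Ψm * Matrix.diagonal lam * Ψm⁻¹ * Ψm = Ψm * Matrix.diagonal lam :=
      Matrix.nonsing_inv_mul_cancel_right _ _ hΨd
    calc M * Matrix.diagonal lam
        = Φm⁻¹ * (Ψm * Matrix.diagonal lam * Ψm⁻¹ * Ψm) := by
          rw [c1, hMdef, Matrix.mul_assoc]
      _ = Φm⁻¹ * (Φm * Matrix.diagonal mu * Φm⁻¹ * Ψm) := by rw [h]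
      _ = Matrix.diagonal mu * M := by
          simp only [Matrix.mul_assoc]
          rw [Matrix.nonsing_inv_mul_cancel_left _ _ hΦd]
  -- construct the permutation
  have hrange : Set.range lam = Set.range mu := hspecΨ.symm.trans hspecΦ
  have hfex : ∀ i, ∃ j, mu j = lam i := by
    intro i
    have : lam i ∈ Set.range mu := hrange ▸ Set.mem_range_self i
    exact this
  choose f hfspec using hfex
  have hfinj : Function.Injective f := fun a b hab =>
    hlaminj (by rw [← hfspec a, ← hfspec b, hab])
  have hfbij : Function.Bijective f := Finite.injective_iff_bijective.mp hfinj
  have hMentry : ∀ j i, j ≠ f i → M j i = 0 := by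
    intro j i hji
    have h0 : (M * Matrix.diagonal lam) j i = (Matrix.diagonal mu * M) j i := by
      rw [hcommon]
    rw [Matrix.mul_diagonal, Matrix.diagonal_mul] at h0
    by_contra hMji
    apply hji
    apply hmuinj
    rw [hfspec i]
    have : mu j * M j i = lam i * M j i := by rw [← h0]; ring
    exact mul_right_cancel₀ hMji this
  have hΨΦM : Ψm = Φm * M := by
    rw [hMdef, Matrix.mul_nonsing_inv_cancel_left _ _ hΦd]
  have hcol : ∀ i, ψ i = M (f i) i • φ (f i) := by
    intro i
    funext a
    have h0 : Ψm a i = (Φm * M) a i := by rw [← hΨΦM]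
    rw [Matrix.mul_apply] at h0
    have h1 : ∑ j, Φm a j * M j i = Φm a (f i) * M (f i) i := by
      apply Finset.sum_eq_single
      · intro j _ hj
        rw [hMentry j i hj, mul_zero]
      · intro h; exact absurd (Finset.mem_univ _) h
    have h2 : ψ i a = φ (f i) a * M (f i) i := by
      rw [show ψ i a = Ψm a i from rfl, h0, h1]; rfl
    rw [h2, Pi.smul_apply, smul_eq_mul]; ring
  have habs : ∀ i, ‖M (f i) i‖ = 1 := by
    intro i
    have h1 := hψn i
    rw [hcol i, nrm_smul, hφn (f i), mul_one] at h1
    exact h1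
  exact ⟨Equiv.ofBijective f hfbij, fun i => M (f i) i, habs, fun i => hcol i⟩

end
end
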